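/- arXiv:1805.10054 — 3 statements merged into one kernel-verified Lean document; each statement's English description precedes it below -/
import Mathlib

section
/- Guaranteed descent of the incremental algorithm: if one iteration consists of (a) a majorization step replacing some entries U_{ij} of U by u*((WX)_{ij}), followed by (b) minimization steps each replacing W by Θᵢ(m*)W where m* exactly minimizes m ↦ ℒ̃ₙ(Θᵢ(m)W, U), then ℒ̃ₙ(W_{new}, U_{new}) ≤ ℒ̃ₙ(W_{old}, U_{old}). -/
open scoped BigOperators

/-- The surrogate ICA loss `ℒ̃ₙ`. -/
noncomputable def icaSurrogate {p n : ℕ} (f : ℝ → ℝ) (X : Matrix (Fin p) (Fin n) ℝ)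
    (W : Matrix (Fin p) (Fin p) ℝ) (U : Matrix (Fin p) (Fin n) ℝ) : ℝ :=
  -Real.log |W.det| +
    (1 / (n : ℝ)) * ∑ i, ∑ j, (U i j * ((W * X) i j) ^ 2 / 2 + f (U i j))

/-! The majorization step lowers every summand of `ℒ̃ₙ`, because the optimal memory value
`ustar y` attains the variational lower bound `G y ≤ u y² / 2 + f u` of every admissible
`u ≥ 0`. A minimization step cannot increase `ℒ̃ₙ`, because keeping the row of the identity
(`m = e_i`, so that `Θᵢ(m) W = W`) is one of the competitors of the exact minimizer. -/

theorem icaSurrogate_le_of_summand_le {p n : ℕ} (f : ℝ → ℝ) (X : Matrix (Fin p) (Fin n) ℝ)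
    (W : Matrix (Fin p) (Fin p) ℝ) {U U' : Matrix (Fin p) (Fin n) ℝ}
    (h : ∀ i j, U i j * ((W * X) i j) ^ 2 / 2 + f (U i j) ≤
      U' i j * ((W * X) i j) ^ 2 / 2 + f (U' i j)) :
    icaSurrogate f X W U ≤ icaSurrogate f X W U' := by
  unfold icaSurrogate
  gcongr _ + _ * ∑ i, ∑ j, ?_ with i _ j _
  exact h i j

theorem icaSurrogate_majorize_le {p n : ℕ} {G f ustar : ℝ → ℝ}
    (hvar : ∀ y u : ℝ, 0 ≤ u → G y ≤ u * y ^ 2 / 2 + f u)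
    (hopt : ∀ y : ℝ, G y = ustar y * y ^ 2 / 2 + f (ustar y))
    (X : Matrix (Fin p) (Fin n) ℝ) (W : Matrix (Fin p) (Fin p) ℝ)
    {Uold Unew : Matrix (Fin p) (Fin n) ℝ} (hUold : ∀ i j, 0 ≤ Uold i j)
    (hmaj : ∀ i j, Unew i j = ustar ((W * X) i j) ∨ Unew i j = Uold i j) :
    icaSurrogate f X W Unew ≤ icaSurrogate f X W Uold := by
  refine icaSurrogate_le_of_summand_le f X W fun i j => ?_
  rcases hmaj i j with h | h <;> rw [h]
  exact (hopt _).symm.trans_le (hvar _ _ (hUold i j))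

theorem updateRow_one_self_mul {ι R : Type*} [Fintype ι] [DecidableEq ι] [Semiring R]
    (i : ι) (W : Matrix ι ι R) :
    Matrix.updateRow 1 i ((1 : Matrix ι ι R) i) * W = W := by
  rw [Matrix.updateRow_eq_self, Matrix.one_mul]

theorem le_of_forall_le_updateRow_one_mul {ι R β : Type*} [Fintype ι] [DecidableEq ι]
    [Semiring R] [Preorder β] {L : Matrix ι ι R → β} {i : ι} {m : ι → R} {W : Matrix ι ι R}
    (hmin : ∀ m', L (Matrix.updateRow 1 i m * W) ≤ L (Matrix.updateRow 1 i m' * W)) :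
    L (Matrix.updateRow 1 i m * W) ≤ L W := by
  simpa only [updateRow_one_self_mul] using hmin ((1 : Matrix ι ι R) i)

theorem apply_le_apply_zero_of_succ_le {β : Type*} [Preorder β] {a : ℕ → β} {k : ℕ}
    (h : ∀ t < k, a (t + 1) ≤ a t) : a k ≤ a 0 := by
  induction k with
  | zero => exact le_rfl
  | succ k ih =>
    exact (h k k.lt_succ_self).trans (ih fun t ht => h t (ht.trans k.lt_succ_self))

theorem incremental_descent_general {p n : ℕ}
    (G f ustar : ℝ → ℝ)
    (hvar : ∀ y u : ℝ, 0 ≤ u → G y ≤ u * y ^ 2 / 2 + f u)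
    (hopt : ∀ y : ℝ, 0 ≤ ustar y ∧ G y = ustar y * y ^ 2 / 2 + f (ustar y))
    (X : Matrix (Fin p) (Fin n) ℝ)
    (Wold : Matrix (Fin p) (Fin p) ℝ)
    (Uold Unew : Matrix (Fin p) (Fin n) ℝ)
    (hUold : ∀ i j, 0 ≤ Uold i j)
    (hmaj : ∀ i j, Unew i j = ustar ((Wold * X) i j) ∨ Unew i j = Uold i j)
    (k : ℕ) (Wseq : ℕ → Matrix (Fin p) (Fin p) ℝ)
    (idx : ℕ → Fin p) (ms : ℕ → Fin p → ℝ)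
    (hW0 : Wseq 0 = Wold)
    (hstep : ∀ t, t < k →
      Wseq (t + 1) = Matrix.updateRow 1 (idx t) (ms t) * Wseq t ∧
      ∀ m' : Fin p → ℝ,
        icaSurrogate f X (Matrix.updateRow 1 (idx t) (ms t) * Wseq t) Unew ≤
        icaSurrogate f X (Matrix.updateRow 1 (idx t) m' * Wseq t) Unew)
    (Wnew : Matrix (Fin p) (Fin p) ℝ) (hWnew : Wnew = Wseq k) :
    icaSurrogate f X Wnew Unew ≤ icaSurrogate f X Wold Uold := by
  have minimization : icaSurrogate f X Wnew Unew ≤ icaSurrogate f X Wold Unew := by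
    rw [hWnew, ← hW0]
    refine apply_le_apply_zero_of_succ_le (a := fun t => icaSurrogate f X (Wseq t) Unew) fun t ht => ?_
    obtain ⟨hWsucc, hmin⟩ := hstep t ht
    simpa only [hWsucc] using le_of_forall_le_updateRow_one_mul
      (L := fun W => icaSurrogate f X W Unew) hmin
  exact minimization.trans
    (icaSurrogate_majorize_le hvar (fun y => (hopt y).2) X Wold hUold hmaj)

/-- Guaranteed descent of one iteration of the incremental MM algorithm:
a majorization step replacing some memory entries by their optimal values,
followed by exact partial minimization steps over single rows, decreases `ℒ̃ₙ`. -/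
theorem incremental_descent {p n : ℕ} (hn : 0 < n)
    (G f ustar : ℝ → ℝ)
    (hvar : ∀ y u : ℝ, 0 ≤ u → G y ≤ u * y ^ 2 / 2 + f u)
    (hopt : ∀ y : ℝ, 0 ≤ ustar y ∧ G y = ustar y * y ^ 2 / 2 + f (ustar y))
    (X : Matrix (Fin p) (Fin n) ℝ)
    (Wold : Matrix (Fin p) (Fin p) ℝ)
    (Uold Unew : Matrix (Fin p) (Fin n) ℝ)
    (hUold : ∀ i j, 0 ≤ Uold i j)
    (hmaj : ∀ i j, Unew i j = ustar ((Wold * X) i j) ∨ Unew i j = Uold i j)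
    (k : ℕ) (Wseq : ℕ → Matrix (Fin p) (Fin p) ℝ)
    (idx : ℕ → Fin p) (ms : ℕ → Fin p → ℝ)
    (hW0 : Wseq 0 = Wold)
    (hstep : ∀ t, t < k →
      Wseq (t + 1) = Matrix.updateRow 1 (idx t) (ms t) * Wseq t ∧
      ∀ m' : Fin p → ℝ,
        icaSurrogate f X (Matrix.updateRow 1 (idx t) (ms t) * Wseq t) Unew ≤
        icaSurrogate f X (Matrix.updateRow 1 (idx t) m' * Wseq t) Unew)
    (Wnew : Matrix (Fin p) (Fin p) ℝ) (hWnew : Wnew = Wseq k) :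
    icaSurrogate f X Wnew Unew ≤ icaSurrogate f X Wold Uold :=
  incremental_descent_general G f ustar hvar hopt X Wold Uold Unew hUold hmaj k Wseq idx ms hW0
    hstep Wnew hWnew
end

section
/- EM freeze in the noise-free limit: suppose A ∈ ℝ^{p×p} is invertible and Σ = 0, so that E[s | x] = A⁻¹x and E[s sᵀ | x] = A⁻¹ x xᵀ A⁻ᵀ. Then the EM update A_new = (Σ_{i=1}^n x_i E[s|x_i]ᵀ)(Σ_{i=1}^n E[s sᵀ|x_i])⁻¹ satisfies A_new = A, provided Σ_{i=1}^n x_i x_iᵀ is invertible. -/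
open scoped BigOperators

lemma vecMulVec_mulVec_right {p : ℕ} (u v : Fin p → ℝ) (M : Matrix (Fin p) (Fin p) ℝ) :
    Matrix.vecMulVec u (M.mulVec v) = Matrix.vecMulVec u v * M.transpose := by
  ext i j
  simp [Matrix.vecMulVec, Matrix.mul_apply, Matrix.mulVec, dotProduct, Finset.mul_sum, Finset.sum_mul, Finset.mul_sum]
  exact Finset.sum_congr rfl fun k _ => by ring

lemma vecMulVec_mulVec_left {p : ℕ} (u v : Fin p → ℝ) (M : Matrix (Fin p) (Fin p) ℝ) :
    Matrix.vecMulVec (M.mulVec u) v = M * Matrix.vecMulVec u v := by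
  ext i j
  simp [Matrix.vecMulVec, Matrix.mul_apply, Matrix.mulVec, dotProduct, Finset.mul_sum, Finset.sum_mul, Finset.sum_mul]
  exact Finset.sum_congr rfl fun k _ => by ring

/-- EM freeze in the noise-free limit: with `E[s|x] = A⁻¹x` and
`E[ssᵀ|x] = A⁻¹xxᵀA⁻ᵀ`, the EM update returns `A` itself. -/
theorem em_freeze_noiseless {p n : ℕ}
    (A : Matrix (Fin p) (Fin p) ℝ) (hA : IsUnit A.det)
    (x : Fin n → (Fin p → ℝ))
    (hC : IsUnit (∑ i, Matrix.vecMulVec (x i) (x i)).det) :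
    (∑ i, Matrix.vecMulVec (x i) (A⁻¹.mulVec (x i))) *
      (∑ i, Matrix.vecMulVec (A⁻¹.mulVec (x i)) (A⁻¹.mulVec (x i)))⁻¹ = A := by
  set C := ∑ i, Matrix.vecMulVec (x i) (x i) with hCdef
  have h1 : (∑ i, Matrix.vecMulVec (x i) (A⁻¹.mulVec (x i))) = C * A⁻¹.transpose := by
    rw [hCdef, Finset.sum_mul]
    exact Finset.sum_congr rfl fun i _ => vecMulVec_mulVec_right _ _ _
  have h2 : (∑ i, Matrix.vecMulVec (A⁻¹.mulVec (x i)) (A⁻¹.mulVec (x i)))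
      = A⁻¹ * (C * A⁻¹.transpose) := by
    rw [← h1, Finset.mul_sum]
    exact Finset.sum_congr rfl fun i _ => by
      rw [vecMulVec_mulVec_left, vecMulVec_mulVec_right]
  have hAinv : IsUnit A⁻¹.det := A.isUnit_nonsing_inv_det hA
  have hAT : IsUnit A⁻¹.transpose.det := by
    rwa [Matrix.det_transpose]
  have hinvT : (A⁻¹.transpose)⁻¹ = A.transpose := by
    rw [← Matrix.transpose_nonsing_inv, Matrix.nonsing_inv_nonsing_inv _ hA]
  rw [h1, h2, Matrix.mul_inv_rev, Matrix.mul_inv_rev, hinvT,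
    Matrix.nonsing_inv_nonsing_inv _ hA]
  calc C * A⁻¹.transpose * (A.transpose * C⁻¹ * A)
      = C * (A⁻¹.transpose * A.transpose) * C⁻¹ * A := by
        simp only [Matrix.mul_assoc]
    _ = A := by
        rw [← Matrix.transpose_mul, Matrix.mul_nonsing_inv _ hA, Matrix.transpose_one,
          Matrix.mul_one, Matrix.mul_nonsing_inv _ hC, Matrix.one_mul]
end

section
/- The Amari distance d(R) = Σᵢ(Σⱼ R²ᵢⱼ/maxₗ R²ᵢₗ − 1) + Σᵢ(Σⱼ R²ⱼᵢ/maxₗ R²ₗⱼ − 1) of an invertible matrix R ∈ ℝ^{p×p} is nonnegative, and d(R) = 0 if and only if R has exactly one nonzero entry in each row and each column (i.e., R is a scaled permutation matrix). -/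
open scoped BigOperators

lemma amari_row_key {p : ℕ} (f : Fin p → ℝ) (hf : ∃ l, f l ≠ 0) :
    1 ≤ ∑ j, f j ^ 2 / ⨆ l, f l ^ 2 ∧
    ((∑ j, f j ^ 2 / ⨆ l, f l ^ 2) = 1 ↔ ∃! j, f j ≠ 0) := by
  obtain ⟨l0, hl0⟩ := hf
  haveI : Nonempty (Fin p) := ⟨l0⟩
  have hbdd : BddAbove (Set.range fun l => f l ^ 2) := (Set.finite_range _).bddAbove
  obtain ⟨m, hm⟩ := Finite.exists_max (fun l => f l ^ 2)
  have hMeq : (⨆ l, f l ^ 2) = f m ^ 2 := le_antisymm (ciSup_le hm) (le_ciSup hbdd m)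
  have hMpos : 0 < f m ^ 2 := by
    refine lt_of_lt_of_le ?_ (hm l0)
    have : f l0 ^ 2 ≠ 0 := pow_ne_zero _ hl0
    exact lt_of_le_of_ne (sq_nonneg _) (Ne.symm this)
  have hsum : (∑ j, f j ^ 2 / ⨆ l, f l ^ 2) = (∑ j, f j ^ 2) / f m ^ 2 := by
    rw [hMeq, ← Finset.sum_div]
  have hle : f m ^ 2 ≤ ∑ j, f j ^ 2 :=
    Finset.single_le_sum (fun j _ => sq_nonneg (f j)) (Finset.mem_univ m)
  constructor
  · rw [hsum, le_div_iff₀ hMpos, one_mul]; exact hle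
  · rw [hsum, div_eq_one_iff_eq (ne_of_gt hMpos)]
    constructor
    · intro h
      have hrest : ∑ j ∈ Finset.univ.erase m, f j ^ 2 = 0 := by
        have h2 := Finset.add_sum_erase Finset.univ (fun j => f j ^ 2) (Finset.mem_univ m)
        linarith
      have hz : ∀ j ≠ m, f j = 0 := by
        intro j hj
        have := (Finset.sum_eq_zero_iff_of_nonneg (fun j _ => sq_nonneg (f j))).mp hrest j
          (Finset.mem_erase.mpr ⟨hj, Finset.mem_univ j⟩)
        exact pow_eq_zero_iff (n := 2) (by norm_num) |>.mp this
      refine ⟨m, fun h0 => ?_, fun j hj => ?_⟩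
      · exact (ne_of_gt hMpos) (by rw [h0]; ring)
      · by_contra hne
        exact hj (hz j hne)
    · rintro ⟨j0, hj0, huniq⟩
      have hmj0 : m = j0 := by
        refine huniq m fun h0 => ?_
        exact (ne_of_gt hMpos) (by rw [h0]; ring)
      have : ∑ j, f j ^ 2 = f j0 ^ 2 := by
        refine Finset.sum_eq_single j0 (fun j _ hj => ?_) (fun h => absurd (Finset.mem_univ j0) h)
        have : f j = 0 := by
          by_contra hne
          exact hj (huniq j hne)
        rw [this]; ring
      rw [this, hmj0]

/-- The Amari distance of an invertible matrix is nonnegative, and vanishes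
iff the matrix is a scaled permutation (exactly one nonzero entry in each
row and each column). -/
theorem amari_distance_nonneg {p : ℕ}
    (R : Matrix (Fin p) (Fin p) ℝ) (hR : IsUnit R.det) (d : ℝ)
    (hd : d = (∑ i, ((∑ j, R i j ^ 2 / ⨆ l, R i l ^ 2) - 1)) +
              (∑ i, ((∑ j, R j i ^ 2 / ⨆ l, R l i ^ 2) - 1))) :
    0 ≤ d ∧
    (d = 0 ↔ (∀ i, ∃! j, R i j ≠ 0) ∧ (∀ j, ∃! i, R i j ≠ 0)) := by
  have hrow : ∀ i, ∃ l, R i l ≠ 0 := by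
    intro i
    by_contra h
    push_neg at h
    exact not_isUnit_zero (Matrix.det_eq_zero_of_row_eq_zero i h ▸ hR)
  have hcol : ∀ i, ∃ l, R l i ≠ 0 := by
    intro i
    by_contra h
    push_neg at h
    exact not_isUnit_zero (Matrix.det_eq_zero_of_column_eq_zero i h ▸ hR)
  have hA := fun i => amari_row_key (fun j => R i j) (hrow i)
  have hB := fun i => amari_row_key (fun j => R j i) (hcol i)
  have hAnn : ∀ i ∈ Finset.univ, (0:ℝ) ≤ (∑ j, R i j ^ 2 / ⨆ l, R i l ^ 2) - 1 :=
    fun i _ => sub_nonneg.mpr (hA i).1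
  have hBnn : ∀ i ∈ Finset.univ, (0:ℝ) ≤ (∑ j, R j i ^ 2 / ⨆ l, R l i ^ 2) - 1 :=
    fun i _ => sub_nonneg.mpr (hB i).1
  have h1 : (0:ℝ) ≤ ∑ i, ((∑ j, R i j ^ 2 / ⨆ l, R i l ^ 2) - 1) := Finset.sum_nonneg hAnn
  have h2 : (0:ℝ) ≤ ∑ i, ((∑ j, R j i ^ 2 / ⨆ l, R l i ^ 2) - 1) := Finset.sum_nonneg hBnn
  refine ⟨hd ▸ add_nonneg h1 h2, ?_⟩
  rw [hd, add_eq_zero_iff_of_nonneg h1 h2, Finset.sum_eq_zero_iff_of_nonneg hAnn,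
    Finset.sum_eq_zero_iff_of_nonneg hBnn]
  constructor
  · rintro ⟨ha, hb⟩
    exact ⟨fun i => (hA i).2.mp (by linarith [ha i (Finset.mem_univ i)]),
      fun i => (hB i).2.mp (by linarith [hb i (Finset.mem_univ i)])⟩
  · rintro ⟨ha, hb⟩
    exact ⟨fun i _ => by have := (hA i).2.mpr (ha i); linarith,
      fun i _ => by have := (hB i).2.mpr (hb i); linarith⟩
end
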